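/- Let η̄ = (η₀,η) and σ̄ = (σ₀,σ) in ℝ×ℝ² with η₀ ≠ 0. Then ∇ω(η̄) = ∇ω(σ̄), where ∇ω(v̄) = (3v₀²+|v|², 2v₀v), holds if and only if one of the following holds: σ̄ = η̄; or σ̄ = −η̄; or (η₀η = σ₀σ and |σ|² = 3η₀² and |η|² = 3σ₀²). -/

import Mathlib

noncomputable section

/-- The frequency space `ℝ × ℝ²`, represented as Euclidean `ℝ³`:
coordinate `0` is `v₀` and coordinates `1, 2` form the spatial part `v`. -/
abbrev E3 : Type := EuclideanSpace ℝ (Fin 3)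

/-- Build an element of `E3` from its three coordinates. -/
def vec3 (a b c : ℝ) : E3 := WithLp.toLp 2 ![a, b, c]

/-- The gradient of the dispersion relation, `∇ω(v̄) = (3v₀² + |v|², 2v₀v)`. -/
def gradOmega (v : E3) : E3 :=
  vec3 (3 * (v 0) ^ 2 + (v 1) ^ 2 + (v 2) ^ 2) (2 * v 0 * v 1) (2 * v 0 * v 2)

lemma E3_eq_iff (x y : E3) : x = y ↔ x 0 = y 0 ∧ x 1 = y 1 ∧ x 2 = y 2 := by
  constructor
  · rintro rfl; exact ⟨rfl, rfl, rfl⟩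
  · rintro ⟨h0, h1, h2⟩
    ext i
    fin_cases i <;> assumption

lemma alg_key (a p q b r s : ℝ) (h : a ≠ 0)
    (h1 : 3 * a ^ 2 + p ^ 2 + q ^ 2 = 3 * b ^ 2 + r ^ 2 + s ^ 2)
    (h2 : 2 * a * p = 2 * b * r) (h3 : 2 * a * q = 2 * b * s) :
    (b = a ∧ r = p ∧ s = q) ∨ (b = -a ∧ r = -p ∧ s = -q) ∨
      ((a * p = b * r ∧ a * q = b * s) ∧ r ^ 2 + s ^ 2 = 3 * a ^ 2 ∧
        p ^ 2 + q ^ 2 = 3 * b ^ 2) := by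
  have h2' : a * p = b * r := by linarith
  have h3' : a * q = b * s := by linarith
  have key : (a ^ 2 - b ^ 2) * (p ^ 2 + q ^ 2 - 3 * b ^ 2) = 0 := by
    linear_combination (a * p + b * r) * h2' + (a * q + b * s) * h3' - b ^ 2 * h1
  rcases mul_eq_zero.mp key with hk | hk
  · have : (a - b) * (a + b) = 0 := by linear_combination hk
    rcases mul_eq_zero.mp this with hb | hb
    · have hba : b = a := by linarith
      subst hba
      exact Or.inl ⟨rfl, mul_left_cancel₀ h h2'.symm, mul_left_cancel₀ h h3'.symm⟩
    · have hba : b = -a := by linarith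
      subst hba
      refine Or.inr (Or.inl ⟨rfl, ?_, ?_⟩)
      · have : a * r = a * (-p) := by linarith
        exact mul_left_cancel₀ h this
      · have : a * s = a * (-q) := by linarith
        exact mul_left_cancel₀ h this
  · exact Or.inr (Or.inr ⟨⟨h2', h3'⟩, by linarith, by linarith⟩)

/-- for `η₀ ≠ 0`, `∇ω(η̄) = ∇ω(σ̄)` holds iff `σ̄ = η̄`, or `σ̄ = −η̄`, or
(`η₀η = σ₀σ` and `|σ|² = 3η₀²` and `|η|² = 3σ₀²`). -/
theorem stmt_3 (η σ : E3) (h : η 0 ≠ 0) :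
    gradOmega η = gradOmega σ ↔
      σ = η ∨ σ = -η ∨
        ((η 0 * η 1 = σ 0 * σ 1 ∧ η 0 * η 2 = σ 0 * σ 2) ∧
          (σ 1) ^ 2 + (σ 2) ^ 2 = 3 * (η 0) ^ 2 ∧
          (η 1) ^ 2 + (η 2) ^ 2 = 3 * (σ 0) ^ 2) := by
  have hneg : ∀ i, (-η) i = -(η i) := fun i => rfl
  rw [E3_eq_iff, E3_eq_iff, E3_eq_iff]
  simp only [gradOmega, vec3, PiLp.toLp_apply, Matrix.cons_val_zero, Matrix.cons_val_one, Matrix.head_cons,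
    Matrix.cons_val_two, Matrix.tail_cons, hneg]
  constructor
  · rintro ⟨h1, h2, h3⟩
    rcases alg_key (η 0) (η 1) (η 2) (σ 0) (σ 1) (σ 2) h h1 h2 h3 with
      ⟨e0, e1, e2⟩ | ⟨e0, e1, e2⟩ | hres
    · exact Or.inl ⟨e0, e1, e2⟩
    · exact Or.inr (Or.inl ⟨e0, e1, e2⟩)
    · exact Or.inr (Or.inr hres)
  · rintro (⟨e0, e1, e2⟩ | ⟨e0, e1, e2⟩ | ⟨⟨e1, e2⟩, e3, e4⟩)
    · rw [e0, e1, e2]; exact ⟨rfl, rfl, rfl⟩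
    · rw [e0, e1, e2]; refine ⟨by ring, by ring, by ring⟩
    · exact ⟨by linarith, by linarith, by linarith⟩
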